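/- Let ρ > 1, let f : ℂ → ℂ be complex-differentiable on the open interior of the Bernstein ellipse E_ρ, i.e. on the set {(z + z⁻¹)/2 : z ∈ ℂ, 1/ρ < |z| < ρ}, and suppose |f(w)| ≤ M for every w in this set. Define the Chebyshev coefficients a_0 := (1/π)·∫_0^π f(cos θ) dθ and a_k := (2/π)·∫_0^π f(cos θ)·cos(kθ) dθ for k ≥ 1. Then |a_0| ≤ M, |a_k| ≤ 2M·ρ^{−k} for every k ≥ 1, and for every n ≥ 0 and every x ∈ [−1, 1], |f(x) − ∑_{k=0}^{n} a_k·T_k(x)| ≤ 2M·ρ^{−n}/(ρ − 1). -/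

import Mathlib

/-!
Substituting `x = (z + z⁻¹) / 2` turns `f` into `F z = f ((z + z⁻¹) / 2)`, holomorphic and
bounded by `M` on the annulus `ρ⁻¹ < ‖z‖ < ρ`, with `F (exp (θ * I)) = f (cos θ)`. The Chebyshev
coefficients of `f` are the Fourier coefficients `c k` of the even function `θ ↦ f (cos θ)`,
doubled for `k ≥ 1`. These are Laurent coefficients of `F`, so by Cauchy's theorem they can be
computed on any circle `‖z‖ = r < ρ`, whence `‖c k‖ ≤ M * r ^ (-k)` and, letting `r → ρ`,
`‖c k‖ ≤ M * ρ ^ (-k)`. The Fourier series then converges absolutely to `f (cos θ)`, and the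
truncation error is bounded by the geometric tail `∑_{k > n} 2 * M * ρ ^ (-k)`.
-/

open Real Polynomial Complex

/-- The open interior of the Bernstein ellipse `E_ρ`:
`{(z + z⁻¹)/2 : 1/ρ < |z| < ρ}`. -/
def BernsteinEllipseInterior (ρ : ℝ) : Set ℂ :=
  {w : ℂ | ∃ z : ℂ, 1 / ρ < ‖z‖ ∧ ‖z‖ < ρ ∧ w = (z + z⁻¹) / 2}

open Metric Set Filter Topology

local instance : Fact (0 < 2 * π) := ⟨two_pi_pos⟩

theorem norm_sub_sum_range_succ_le_of_hasSum {E : Type*} [SeminormedAddCommGroup E] {b : ℕ → E}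
    {v : E} {C ρ : ℝ} (hρ : 1 < ρ) (hb : ∀ k : ℕ, ‖b k‖ ≤ C * ρ ^ (-(k : ℤ))) (hsum : HasSum b v)
    (n : ℕ) : ‖v - ∑ k ∈ Finset.range (n + 1), b k‖ ≤ C * ρ ^ (-(n : ℤ)) / (ρ - 1) := by
  have hb' : ∀ k, ‖b k‖ ≤ C * ρ⁻¹ ^ k := by simpa only [zpow_neg, zpow_natCast, inv_pow] using hb
  rw [norm_sub_rev]
  convert norm_sub_le_of_geometric_bound_of_hasSum (inv_lt_one_of_one_lt₀ hρ) hb' hsum (n + 1)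
    using 1
  rw [zpow_neg, zpow_natCast, inv_pow, pow_succ]
  field_simp

section Annulus

variable {E : Type*} [NormedAddCommGroup E] [NormedSpace ℂ E]
  {c : ℂ} {R₁ R₂ r s : ℝ} {g : ℂ → E}

theorem circleIntegral_eq_of_differentiableOn_annulus (hR₁ : 0 ≤ R₁)
    (hg : DifferentiableOn ℂ g (ball c R₂ \ closedBall c R₁))
    (hr : r ∈ Ioo R₁ R₂) (hs : s ∈ Ioo R₁ R₂) :
    (∮ z in C(c, r), g z) = ∮ z in C(c, s), g z := by
  wlog hrs : r ≤ s generalizing r s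
  · exact (this hs hr (le_of_not_ge hrs)).symm
  have hopen : IsOpen (ball c R₂ \ closedBall c R₁) := isOpen_ball.sdiff isClosed_closedBall
  have hsub : closedBall c s \ ball c r ⊆ ball c R₂ \ closedBall c R₁ :=
    sdiff_subset_sdiff (closedBall_subset_ball hs.2) (closedBall_subset_ball hr.1)
  refine (circleIntegral_eq_of_differentiable_on_annulus_off_countable (hR₁.trans_lt hr.1) hrs
    countable_empty (hg.continuousOn.mono hsub) fun z hz => hg.differentiableAt ?_).symm
  exact hopen.mem_nhds
    (hsub ⟨ball_subset_closedBall hz.1.1, fun h => hz.1.2 (ball_subset_closedBall h)⟩)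

theorem norm_circleIntegral_le_of_differentiableOn_annulus {C : ℝ} {m : ℤ} (hR₁ : 0 ≤ R₁)
    (hg : DifferentiableOn ℂ g (ball c R₂ \ closedBall c R₁))
    (hgC : ∀ z ∈ ball c R₂ \ closedBall c R₁, ‖g z‖ ≤ C * ‖z - c‖ ^ m) (hs : s ∈ Ioo R₁ R₂) :
    ‖∮ z in C(c, s), g z‖ ≤ 2 * π * C * R₂ ^ (m + 1) := by
  have hbound : ∀ r ∈ Ioo R₁ R₂, ‖∮ z in C(c, s), g z‖ ≤ 2 * π * C * r ^ (m + 1) := by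
    intro r hr
    have hr₀ : 0 < r := hR₁.trans_lt hr.1
    rw [← circleIntegral_eq_of_differentiableOn_annulus hR₁ hg hr hs]
    calc ‖∮ z in C(c, r), g z‖ ≤ 2 * π * r * (C * r ^ m) := by
          refine circleIntegral.norm_integral_le_of_norm_le_const hr₀.le fun z hz => ?_
          rw [mem_sphere_iff_norm] at hz
          rw [← hz]
          exact hgC z
            ⟨by simpa [dist_eq_norm, hz] using hr.2, by simpa [dist_eq_norm, hz] using hr.1⟩
      _ = 2 * π * C * r ^ (m + 1) := by rw [zpow_add_one₀ hr₀.ne']; ring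
  have hlim : Tendsto (fun r => 2 * π * C * r ^ (m + 1)) (𝓝[<] R₂)
      (𝓝 (2 * π * C * R₂ ^ (m + 1))) :=
    ((continuousAt_zpow₀ R₂ (m + 1) (Or.inl (hR₁.trans_lt (hs.1.trans hs.2)).ne')).tendsto
      |>.const_mul _).mono_left nhdsWithin_le_nhds
  exact ge_of_tendsto hlim (eventually_of_mem (Ioo_mem_nhdsLT (hs.1.trans hs.2)) hbound)

end Annulus

section FourierCosine

variable {g : ℝ → ℂ}

theorem fourierCoeff_lift_eq_intervalIntegral (hper : Function.Periodic g (2 * π)) (m : ℤ)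
    (a : ℝ) :
    fourierCoeff hper.lift m = 1 / (2 * π) * ∫ θ in a..a + 2 * π, cexp (-(m * θ * I)) * g θ := by
  rw [fourierCoeff_eq_intervalIntegral _ m a, Complex.real_smul]
  push_cast
  congr 1
  refine intervalIntegral.integral_congr fun θ _ => ?_
  rw [smul_eq_mul, fourier_coe_apply, Function.Periodic.lift_coe]
  congr 2
  field_simp
  push_cast
  ring

theorem fourierCoeff_lift_eq_integral_cos (hper : Function.Periodic g (2 * π))
    (heven : g.Even) (hcont : Continuous g) (m : ℤ) :
    fourierCoeff hper.lift m = 1 / π * ∫ θ in 0..π, g θ * (Real.cos (m * θ) : ℂ) := by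
  have hint : ∀ a b : ℝ, IntervalIntegrable (fun θ : ℝ => cexp (-(m * θ * I)) * g θ)
      MeasureTheory.volume a b := fun a b => by
    apply Continuous.intervalIntegrable
    fun_prop
  have hreflect : ∫ θ in -π..0, cexp (-(m * θ * I)) * g θ =
      ∫ θ in 0..π, cexp (m * θ * I) * g θ := by
    rw [← neg_zero, ← intervalIntegral.integral_comp_neg]
    simp [heven _]
  have hcos : ∀ θ : ℝ, cexp (m * θ * I) * g θ + cexp (-(m * θ * I)) * g θ =
      2 * (g θ * (Real.cos (m * θ) : ℂ)) := by
    intro θ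
    rw [ofReal_cos, Complex.cos]
    push_cast
    simp only [neg_mul]
    ring
  rw [fourierCoeff_lift_eq_intervalIntegral hper m (-π), show -π + 2 * π = π by ring,
    ← intervalIntegral.integral_add_adjacent_intervals (hint _ _) (hint _ _), hreflect,
    ← intervalIntegral.integral_add (by apply Continuous.intervalIntegrable; fun_prop) (hint _ _),
    intervalIntegral.integral_congr fun θ _ => hcos θ, intervalIntegral.integral_const_mul]
  field_simp

theorem fourierCoeff_lift_neg (hper : Function.Periodic g (2 * π)) (heven : g.Even)
    (hcont : Continuous g) (m : ℤ) :
    fourierCoeff hper.lift (-m) = fourierCoeff hper.lift m := by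
  simp only [fourierCoeff_lift_eq_integral_cos hper heven hcont, Int.cast_neg, neg_mul,
    Real.cos_neg]

theorem hasSum_cosine_series (hper : Function.Periodic g (2 * π)) (heven : g.Even)
    (hcont : Continuous g) (hsum : Summable fun n : ℕ => fourierCoeff hper.lift n)
    {a : ℕ → ℂ} (ha0 : a 0 = fourierCoeff hper.lift 0)
    (ha : ∀ k, 1 ≤ k → a k = 2 * fourierCoeff hper.lift k) (θ : ℝ) :
    HasSum (fun k : ℕ => a k * (Real.cos (k * θ) : ℂ)) (g θ) := by
  set c := fourierCoeff hper.lift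
  have hneg : ∀ m, c (-m) = c m := fourierCoeff_lift_neg hper heven hcont
  let G : C(AddCircle (2 * π), ℂ) := ⟨hper.lift, continuous_coinduced_dom.mpr hcont⟩
  have hsum' : Summable c := .of_nat_of_neg hsum (by simpa only [hneg] using hsum)
  have hfourier : HasSum (fun m : ℤ => c m * fourier m (θ : AddCircle (2 * π))) (g θ) :=
    has_pointwise_sum_fourier_series_of_summable (f := G) hsum' θ
  have harg : ∀ m : ℤ, 2 * π * I * m * θ / ((2 * π : ℝ) : ℂ) = m * θ * I := by
    intro m
    push_cast
    field_simp
  simp only [fourier_coe_apply, harg] at hfourier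
  have h := (hfourier.nat_add_neg.update 0 (c 0)).congr_fun
    (g := fun k : ℕ => a k * (Real.cos (k * θ) : ℂ)) fun k => ?_
  · simpa using h
  rcases Nat.eq_zero_or_pos k with rfl | hk
  · simp [ha0]
  · rw [Function.update_of_ne hk.ne', hneg, ha k hk, ofReal_cos, Complex.cos]
    push_cast
    simp only [neg_mul]
    ring

theorem fourierCoeff_lift_eq_circleIntegral (hper : Function.Periodic g (2 * π))
    {F : ℂ → ℂ} (hgF : ∀ θ, g θ = F (circleMap 0 1 θ)) (m : ℤ) :
    fourierCoeff hper.lift m = (2 * π * I)⁻¹ * ∮ z in C(0, 1), z ^ (-m - 1) * F z := by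
  rw [fourierCoeff_lift_eq_intervalIntegral hper m 0, zero_add, circleIntegral,
    ← intervalIntegral.integral_const_mul, ← intervalIntegral.integral_const_mul]
  refine intervalIntegral.integral_congr fun θ _ => ?_
  have hz : circleMap 0 1 θ = cexp (θ * I) := by simp [circleMap]
  have hpow : cexp (θ * I) ^ (-m - 1) * cexp (θ * I) = cexp (-(m * θ * I)) := by
    rw [← zpow_add_one₀ (Complex.exp_ne_zero _), sub_add_cancel, ← exp_int_mul]
    push_cast
    ring_nf
  rw [deriv_circleMap, hgF, smul_eq_mul, hz, ← hpow]
  field_simp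

end FourierCosine

section Joukowski

noncomputable def joukowski (z : ℂ) : ℂ := (z + z⁻¹) / 2

theorem joukowski_circleMap_zero_one (θ : ℝ) : joukowski (circleMap 0 1 θ) = Real.cos θ := by
  simp only [joukowski, circleMap, ofReal_one, one_mul, zero_add, ofReal_cos, Complex.cos,
    ← Complex.exp_neg, neg_mul]

theorem mapsTo_joukowski_annulus (ρ : ℝ) :
    MapsTo joukowski (ball 0 ρ \ closedBall 0 (1 / ρ)) (BernsteinEllipseInterior ρ) :=
  fun z hz => ⟨z, by simpa using hz.2, by simpa using hz.1, rfl⟩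

theorem zero_notMem_annulus (ρ : ℝ) : (0 : ℂ) ∉ ball 0 ρ \ closedBall 0 (1 / ρ) := by
  rintro ⟨hball, hclosedBall⟩
  have hρ : 0 < ρ := by simpa using hball
  exact hclosedBall (mem_closedBall_self (by positivity))

theorem circleMap_zero_one_mem_annulus {ρ : ℝ} (hρ : 1 < ρ) (θ : ℝ) :
    circleMap 0 1 θ ∈ ball 0 ρ \ closedBall 0 (1 / ρ) := by
  simpa [norm_circleMap_zero] using ⟨hρ, inv_lt_one_of_one_lt₀ hρ⟩

theorem periodic_comp_cos (f : ℂ → ℂ) :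
    Function.Periodic (fun θ : ℝ => f (Real.cos θ)) (2 * π) := fun θ => by
  simp only [Real.cos_add_two_pi]

theorem even_comp_cos (f : ℂ → ℂ) : Function.Even fun θ : ℝ => f (Real.cos θ) := fun θ => by
  simp only [Real.cos_neg]

variable {ρ M : ℝ} {f : ℂ → ℂ}

theorem DifferentiableOn.comp_joukowski (hf : DifferentiableOn ℂ f (BernsteinEllipseInterior ρ)) :
    DifferentiableOn ℂ (f ∘ joukowski) (ball 0 ρ \ closedBall 0 (1 / ρ)) := by
  refine hf.comp (fun z hz => ?_) (mapsTo_joukowski_annulus ρ)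
  have hz₀ : z ≠ 0 := ne_of_mem_of_not_mem hz (zero_notMem_annulus ρ)
  exact ((differentiableAt_id.add (differentiableAt_inv hz₀)).div_const 2).differentiableWithinAt

theorem continuous_comp_cos (hρ : 1 < ρ) (hf : DifferentiableOn ℂ f (BernsteinEllipseInterior ρ)) :
    Continuous fun θ : ℝ => f (Real.cos θ) := by
  simp only [← joukowski_circleMap_zero_one]
  exact hf.comp_joukowski.continuousOn.comp_continuous (continuous_circleMap 0 1)
    (circleMap_zero_one_mem_annulus hρ)

theorem norm_fourierCoeff_comp_cos_le (hρ : 1 < ρ)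
    (hf : DifferentiableOn ℂ f (BernsteinEllipseInterior ρ))
    (hM : ∀ w ∈ BernsteinEllipseInterior ρ, ‖f w‖ ≤ M) (m : ℤ) :
    ‖fourierCoeff (periodic_comp_cos f).lift m‖ ≤ M * ρ ^ (-m) := by
  have hρ₀ : 0 < ρ := one_pos.trans hρ
  have hcircle := norm_circleIntegral_le_of_differentiableOn_annulus (C := M) (m := -m - 1)
    (g := fun z => z ^ (-m - 1) * (f ∘ joukowski) z) (by positivity)
    ((differentiableOn_zpow _ _ (Or.inl (zero_notMem_annulus ρ))).mul hf.comp_joukowski)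
    (fun z hz => by
      rw [norm_mul, norm_zpow, sub_zero, mul_comm]
      exact mul_le_mul_of_nonneg_right (hM _ (mapsTo_joukowski_annulus ρ hz)) (by positivity))
    ⟨inv_lt_one_of_one_lt₀ hρ |>.trans_eq' (one_div ρ).symm, hρ⟩
  rw [fourierCoeff_lift_eq_circleIntegral _ (F := f ∘ joukowski)
    (fun θ => by simp [joukowski_circleMap_zero_one]) m, norm_mul, norm_inv]
  calc ‖2 * π * I‖⁻¹ * ‖∮ z in C(0, 1), z ^ (-m - 1) * (f ∘ joukowski) z‖
      ≤ (2 * π)⁻¹ * (2 * π * M * ρ ^ (-m - 1 + 1)) := by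
        rw [show ‖2 * π * I‖ = 2 * π by simp [pi_pos.le]]
        gcongr
    _ = M * ρ ^ (-m) := by
        rw [sub_add_cancel]
        field_simp

end Joukowski

/-- **Trefethen's theorem** (Theorem 3.10): if `f` is analytic in the interior
of the Bernstein ellipse `E_ρ` and bounded there by `M`, then its Chebyshev
coefficients satisfy `|a₀| ≤ M`, `|a_k| ≤ 2M ρ^{-k}`, and the degree-`n`
Chebyshev truncation is `(2M ρ^{-n}/(ρ-1))`-close to `f` on `[-1, 1]`. -/
theorem trefethen (ρ : ℝ) (hρ : 1 < ρ) (M : ℝ) (f : ℂ → ℂ)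
    (hf : DifferentiableOn ℂ f (BernsteinEllipseInterior ρ))
    (hM : ∀ w ∈ BernsteinEllipseInterior ρ, ‖f w‖ ≤ M)
    (a : ℕ → ℂ)
    (ha0 : a 0 = (1 / (π : ℂ)) * ∫ θ in (0 : ℝ)..π, f ((Real.cos θ : ℝ) : ℂ))
    (hak : ∀ k : ℕ, 1 ≤ k →
      a k = (2 / (π : ℂ)) *
        ∫ θ in (0 : ℝ)..π, f ((Real.cos θ : ℝ) : ℂ) * ((Real.cos (k * θ) : ℝ) : ℂ)) :
    ‖a 0‖ ≤ M ∧
    (∀ k : ℕ, 1 ≤ k → ‖a k‖ ≤ 2 * M * ρ ^ (-(k : ℤ))) ∧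
    (∀ n : ℕ, ∀ x : ℝ, x ∈ Set.Icc (-1 : ℝ) 1 →
      ‖(f ((x : ℝ) : ℂ) -
          ∑ k ∈ Finset.range (n + 1),
            a k * (((Polynomial.Chebyshev.T ℝ (k : ℤ)).eval x : ℝ) : ℂ))‖ ≤
        2 * M * ρ ^ (-(n : ℤ)) / (ρ - 1)) := by
  have hcont := continuous_comp_cos hρ hf
  have hcos := fourierCoeff_lift_eq_integral_cos (periodic_comp_cos f) (even_comp_cos f) hcont
  set c := fourierCoeff (periodic_comp_cos f).lift
  have hc : ∀ m, ‖c m‖ ≤ M * ρ ^ (-m) := norm_fourierCoeff_comp_cos_le hρ hf hM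
  have ha0c : a 0 = c 0 := by simp [ha0, hcos]
  have hakc : ∀ k, 1 ≤ k → a k = 2 * c k := fun k hk => by
    rw [hak k hk, hcos]
    push_cast
    ring
  have hak_le : ∀ k : ℕ, 1 ≤ k → ‖a k‖ ≤ 2 * M * ρ ^ (-(k : ℤ)) := fun k hk => by
    rw [hakc k hk, norm_mul, Complex.norm_two, mul_assoc]
    exact mul_le_mul_of_nonneg_left (hc k) zero_le_two
  have ha0_le : ‖a 0‖ ≤ M := by simpa [ha0c] using hc 0
  refine ⟨ha0_le, hak_le, fun n x hx => ?_⟩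
  obtain ⟨θ, rfl⟩ : ∃ θ, Real.cos θ = x := ⟨arccos x, cos_arccos hx.1 hx.2⟩
  have hsummable : Summable fun n : ℕ => c n :=
    .of_norm_bounded ((summable_geometric_of_lt_one (by positivity)
      (inv_lt_one_of_one_lt₀ hρ)).mul_left M) fun n => by simpa [zpow_neg, inv_pow] using hc n
  have hsum := hasSum_cosine_series _ (even_comp_cos f) hcont hsummable ha0c hakc θ
  simp only [Chebyshev.T_real_cos, Int.cast_natCast]
  refine norm_sub_sum_range_succ_le_of_hasSum hρ (fun k => ?_) hsum n
  rw [norm_mul, norm_real, Real.norm_eq_abs]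
  refine (mul_le_of_le_one_right (norm_nonneg _) (abs_cos_le_one _)).trans ?_
  rcases Nat.eq_zero_or_pos k with rfl | hk
  · simp only [CharP.cast_eq_zero, neg_zero, zpow_zero, mul_one]
    linarith [norm_nonneg (a 0)]
  · exact hak_le k hk
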